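/- arXiv:1709.05789 — 2 statements merged into one kernel-verified Lean document; each statement's English description precedes it below -/
import Mathlib

section
/- If A and B are n × n real correlation matrices (positive semidefinite with unit diagonal), then A^{1/2} ∘ B^{1/2} ≤ I in the Loewner order, i.e., I − A^{1/2} ∘ B^{1/2} is positive semidefinite. -/
/-!
Write `S = A^{1/2}` and `T = B^{1/2}`. As `S` is symmetric with `S * S = A`, the squared norm of
the `i`-th row of `S` is `A i i = 1`; likewise every column of `T` is a unit vector. Then AM-GM
termwise gives
`xᵀ (S ∘ T) x = ∑ i j, (x i * S i j) * (T i j * x j) ≤ ½ ∑ i j, ((x i * S i j)² + (T i j * x j)²) = |x|²`.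
-/

open Matrix

open scoped ComplexOrder in
/-- The positive semidefinite square root, as `Matrix.PosSemidef.sqrt` was defined in the older
Mathlib (removed since, in favour of `CFC.sqrt`). -/
noncomputable def Matrix.PosSemidef.sqrt {n 𝕜 : Type*} [Fintype n] [RCLike 𝕜] [DecidableEq n]
    {A : Matrix n n 𝕜} (hA : A.PosSemidef) : Matrix n n 𝕜 :=
  hA.1.eigenvectorUnitary.1 * diagonal ((↑) ∘ (√·) ∘ hA.1.eigenvalues) *
  (star hA.1.eigenvectorUnitary : Matrix n n 𝕜)

open scoped ComplexOrder

namespace Matrix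

namespace PosSemidef

section RCLike

variable {n 𝕜 : Type*} [Fintype n] [RCLike 𝕜] [DecidableEq n] {A : Matrix n n 𝕜}

lemma sqrt_eq_cfc (hA : A.PosSemidef) : hA.sqrt = cfc Real.sqrt A :=
  (hA.1.cfc_eq _).symm

lemma isHermitian_sqrt (hA : A.PosSemidef) : hA.sqrt.IsHermitian := by
  rw [sqrt_eq_cfc]
  exact cfc_predicate _ _

lemma sqrt_mul_self (hA : A.PosSemidef) : hA.sqrt * hA.sqrt = A := by
  rw [sqrt_eq_cfc, ← cfc_mul _ _ A]
  conv_rhs => rw [← cfc_id' ℝ A hA.1.isSelfAdjoint]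
  refine cfc_congr fun x hx => Real.mul_self_sqrt ?_
  obtain ⟨i, rfl⟩ := hA.1.spectrum_real_eq_range_eigenvalues ▸ hx
  exact hA.eigenvalues_nonneg i

end RCLike

section Real

variable {ι : Type*} [Fintype ι] [DecidableEq ι] {A : Matrix ι ι ℝ}

lemma sum_sqrt_apply_sq (hA : A.PosSemidef) (i : ι) : ∑ j, hA.sqrt i j ^ 2 = A i i := by
  conv_rhs => rw [← hA.sqrt_mul_self, mul_apply]
  refine Finset.sum_congr rfl fun j _ => ?_
  rw [sq, ← hA.isHermitian_sqrt.apply i j, star_trivial]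

lemma sum_sqrt_apply_sq' (hA : A.PosSemidef) (j : ι) : ∑ i, hA.sqrt i j ^ 2 = A j j := by
  simp_rw [← hA.isHermitian_sqrt.apply _ j, star_trivial, hA.sum_sqrt_apply_sq]

end Real

end PosSemidef

variable {ι : Type*} [Fintype ι]

lemma dotProduct_hadamard_mulVec_le {S T : Matrix ι ι ℝ}
    (hS : ∀ i, ∑ j, S i j ^ 2 ≤ 1) (hT : ∀ j, ∑ i, T i j ^ 2 ≤ 1) (x : ι → ℝ) :
    x ⬝ᵥ (S ⊙ T) *ᵥ x ≤ x ⬝ᵥ x := by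
  calc x ⬝ᵥ (S ⊙ T) *ᵥ x = ∑ i, ∑ j, (x i * S i j) * (T i j * x j) := by
        simp only [dotProduct, mulVec, hadamard_apply, Finset.mul_sum]
        exact Finset.sum_congr rfl fun i _ => Finset.sum_congr rfl fun j _ => by ring
    _ ≤ ∑ i, ∑ j, ((x i * S i j) ^ 2 + (T i j * x j) ^ 2) / 2 := by
        gcongr with i _ j _
        linarith [two_mul_le_add_sq (x i * S i j) (T i j * x j)]
    _ = (∑ i, x i ^ 2 * ∑ j, S i j ^ 2 + ∑ j, x j ^ 2 * ∑ i, T i j ^ 2) / 2 := by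
        simp only [← Finset.sum_div, Finset.sum_add_distrib, Finset.mul_sum, mul_pow]
        rw [Finset.sum_comm (f := fun i j => T i j ^ 2 * x j ^ 2)]
        simp only [mul_comm]
    _ ≤ (∑ i, x i ^ 2 + ∑ j, x j ^ 2) / 2 := by
        gcongr with i _ j _
        · exact mul_le_of_le_one_right (sq_nonneg _) (hS i)
        · exact mul_le_of_le_one_right (sq_nonneg _) (hT j)
    _ = x ⬝ᵥ x := by simp only [dotProduct, sq]; ring

lemma posSemidef_one_sub_of_dotProduct_mulVec_le [DecidableEq ι] {M : Matrix ι ι ℝ}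
    (hM : M.IsHermitian) (h : ∀ x, x ⬝ᵥ M *ᵥ x ≤ x ⬝ᵥ x) : (1 - M).PosSemidef :=
  .of_dotProduct_mulVec_nonneg (isHermitian_one.sub hM) fun x => by
    simpa [sub_mulVec, dotProduct_sub] using h x

end Matrix

theorem sqrt_hadamard_sqrt_le_one {n : ℕ} (A B : Matrix (Fin n) (Fin n) ℝ)
    (hA : A.PosSemidef) (hB : B.PosSemidef)
    (hdA : ∀ i, A i i = 1) (hdB : ∀ i, B i i = 1) :
    ((1 : Matrix (Fin n) (Fin n) ℝ) - Matrix.hadamard hA.sqrt hB.sqrt).PosSemidef :=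
  posSemidef_one_sub_of_dotProduct_mulVec_le (hA.isHermitian_sqrt.hadamard hB.isHermitian_sqrt)
    (dotProduct_hadamard_mulVec_le (fun i => ((hA.sum_sqrt_apply_sq i).trans (hdA i)).le)
      (fun j => ((hB.sum_sqrt_apply_sq' j).trans (hdB j)).le))
end

section
/- Let A and B be m × n real matrices with unit ℓ₂-norm columns, and S ⊆ {1,…,n} with |S| = k ≤ m such that the eigenvalues of A_Sᵀ A_S and B_Sᵀ B_S lie in [1 − δ, 1 + δ], δ ∈ (0,1). Then (A_S ⊙ B_S)ᵀ(A_S ⊙ B_S) ≥ (1 − δ²) I_k in the Loewner order. -/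
/-!
The Gram matrices `G = A_Sᵀ A_S` and `H = B_Sᵀ B_S` have unit diagonal, so
`(G - (1 - δ) I) ∘ (H - (1 - δ) I) = G ∘ H - (1 - δ²) I`. Both factors on the left are
positive semidefinite because the spectra of `G` and `H` lie above `1 - δ`, hence so is
their Hadamard product by the Schur product theorem.
-/

open Matrix

/-- Columnwise Khatri-Rao product. -/
def khatriRao {m : ℕ} {ι : Type*} (A B : Matrix (Fin m) ι ℝ) :
    Matrix (Fin m × Fin m) ι ℝ :=
  fun p j => A p.1 j * B p.2 j

theorem khatriRao_transpose_mul_self {m : ℕ} {ι : Type*} [Fintype ι]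
    (X Y : Matrix (Fin m) ι ℝ) :
    (khatriRao X Y)ᵀ * khatriRao X Y = (Xᵀ * X) ⊙ (Yᵀ * Y) := by
  ext i j
  simp only [mul_apply, hadamard_apply, transpose_apply, khatriRao, Fintype.sum_prod_type,
    Finset.sum_mul_sum]
  exact Finset.sum_congr rfl fun a _ => Finset.sum_congr rfl fun b _ => by ring

open scoped MatrixOrder ComplexOrder in
theorem Matrix.IsHermitian.posSemidef_sub_smul_one {ι 𝕜 : Type*} [Fintype ι] [DecidableEq ι]
    [RCLike 𝕜] {H : Matrix ι ι 𝕜} (hH : H.IsHermitian) {c : ℝ}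
    (h : ∀ μ ∈ spectrum ℝ H, c ≤ μ) :
    (H - c • 1).PosSemidef := by
  rw [← nonneg_iff_posSemidef, sub_nonneg, ← Algebra.algebraMap_eq_smul_one]
  exact (algebraMap_le_iff_le_spectrum hH).mpr h

theorem hadamard_sub_smul_one_sub_smul_one {ι R : Type*} [DecidableEq ι] [CommRing R]
    {G H : Matrix ι ι R} (hG : ∀ i, G i i = 1) (hH : ∀ i, H i i = 1) (δ : R) :
    (G - (1 - δ) • 1) ⊙ (H - (1 - δ) • 1) = G ⊙ H - (1 - δ ^ 2) • 1 := by
  ext i j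
  rcases eq_or_ne i j with rfl | hij
  · simp only [Matrix.sub_apply, hadamard_apply, Matrix.smul_apply, one_apply_eq, hG, hH,
      smul_eq_mul]
    ring
  · simp [one_apply_ne hij]

theorem gram_khatriRao_submatrix_ge_general {m n : ℕ} (A B : Matrix (Fin m) (Fin n) ℝ)
    (hAcol : ∀ j, ∑ i, (A i j) ^ 2 = 1) (hBcol : ∀ j, ∑ i, (B i j) ^ 2 = 1)
    (S : Finset (Fin n))
    (δ : ℝ)
    (AS : Matrix (Fin m) {j // j ∈ S} ℝ)
    (hAS : AS = A.submatrix id (fun j : {j // j ∈ S} => (j : Fin n)))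
    (BS : Matrix (Fin m) {j // j ∈ S} ℝ)
    (hBS : BS = B.submatrix id (fun j : {j // j ∈ S} => (j : Fin n)))
    (hGA : spectrum ℝ (ASᵀ * AS) ⊆ Set.Icc (1 - δ) (1 + δ))
    (hGB : spectrum ℝ (BSᵀ * BS) ⊆ Set.Icc (1 - δ) (1 + δ)) :
    ((khatriRao AS BS)ᵀ * khatriRao AS BS -
      (1 - δ ^ 2) • (1 : Matrix {j // j ∈ S} {j // j ∈ S} ℝ)).PosSemidef := by
  have hGAdiag : ∀ j, (ASᵀ * AS) j j = 1 := fun j => by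
    simpa [hAS, mul_apply, sq] using hAcol j
  have hGBdiag : ∀ j, (BSᵀ * BS) j j = 1 := fun j => by
    simpa [hBS, mul_apply, sq] using hBcol j
  have hApsd := (isHermitian_conjTranspose_mul_self AS).posSemidef_sub_smul_one
    fun μ hμ => (hGA hμ).1
  have hBpsd := (isHermitian_conjTranspose_mul_self BS).posSemidef_sub_smul_one
    fun μ hμ => (hGB hμ).1
  rw [khatriRao_transpose_mul_self, ← hadamard_sub_smul_one_sub_smul_one hGAdiag hGBdiag]
  exact hApsd.hadamard hBpsd

/-- Lower Loewner bound for the Gram matrix of the Khatri-Rao product of column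
submatrices: `(A_S ⊙ B_S)ᵀ(A_S ⊙ B_S) ≥ (1 − δ²) I`. -/
theorem gram_khatriRao_submatrix_ge {m n k : ℕ} (A B : Matrix (Fin m) (Fin n) ℝ)
    (hAcol : ∀ j, ∑ i, (A i j) ^ 2 = 1) (hBcol : ∀ j, ∑ i, (B i j) ^ 2 = 1)
    (S : Finset (Fin n)) (hS : S.card = k) (hk : k ≤ m)
    (δ : ℝ) (hδ : δ ∈ Set.Ioo (0 : ℝ) 1)
    (AS : Matrix (Fin m) {j // j ∈ S} ℝ)
    (hAS : AS = A.submatrix id (fun j : {j // j ∈ S} => (j : Fin n)))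
    (BS : Matrix (Fin m) {j // j ∈ S} ℝ)
    (hBS : BS = B.submatrix id (fun j : {j // j ∈ S} => (j : Fin n)))
    (hGA : spectrum ℝ (ASᵀ * AS) ⊆ Set.Icc (1 - δ) (1 + δ))
    (hGB : spectrum ℝ (BSᵀ * BS) ⊆ Set.Icc (1 - δ) (1 + δ)) :
    ((khatriRao AS BS)ᵀ * khatriRao AS BS -
      (1 - δ ^ 2) • (1 : Matrix {j // j ∈ S} {j // j ∈ S} ℝ)).PosSemidef :=
  gram_khatriRao_submatrix_ge_general A B hAcol hBcol S δ AS hAS BS hBS hGA hGB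
end
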